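/- A reparametrized partial fraction identity: Let r ≥ 1 and let a, c, f, q, e₁, …, e_r, z₁, …, z_r be nonzero complex numbers with z₁, …, z_r pairwise distinct, set E := e₁⋯e_r, and assume cEf ≠ aq and a z_l q ≠ c for all l. Then ∑_{l=1}^r [(1 − f z_l) ∏_{i=1}^r (1 − e_i z_l/z_i)] / [(1 − cEf/(aq))(1 − a z_l q/c) ∏_{i≠l} (1 − z_l/z_i)] = 1 − [(1 − cf/(aq))/(1 − cEf/(aq))] · ∏_{i=1}^r (1 − c e_i/(a z_i q))/(1 − c/(a z_i q)). -/

import Mathlib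

/-!
Lagrange interpolation at `0` of `P(x) = (1 - f x) ∏ᵢ (1 - eᵢ x / zᵢ)` on the `r + 1` nodes
`z₁, …, z_r` and `w = c / (a q)`. As `deg P` equals the number of nodes, `P` is its interpolant
plus its leading coefficient times the nodal polynomial. At `0` this reads `1 = cEf/(aq) + (term
of the node w) + ∑ₗ (term of the node z_l)`; the term of `w` is the product on the right-hand side
and the terms of the `z_l` are the summands on the left, up to the factor `1 - cEf/(aq)`.
-/

open Polynomial Finset

namespace Polynomial

variable {R ι : Type*} [CommRing R] (s : Finset ι) (b : ι → R)

theorem natDegree_one_sub_C_mul_X_le (c : R) : (1 - C c * X).natDegree ≤ 1 := by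
  compute_degree

theorem natDegree_prod_one_sub_C_mul_X_le : (∏ i ∈ s, (1 - C (b i) * X)).natDegree ≤ #s :=
  (natDegree_prod_le _ _).trans <|
    (sum_le_sum fun i _ => natDegree_one_sub_C_mul_X_le (b i)).trans_eq (by simp)

theorem coeff_prod_one_sub_C_mul_X_card :
    (∏ i ∈ s, (1 - C (b i) * X)).coeff #s = ∏ i ∈ s, -b i := by
  have := coeff_prod_of_natDegree_le (s := s) (fun i => 1 - C (b i) * X) 1
    fun i _ => natDegree_one_sub_C_mul_X_le (b i)
  simpa [coeff_one] using this

end Polynomial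

namespace Lagrange

variable {F ι : Type*} [Field F] [DecidableEq ι] {s : Finset ι} {v : ι → F}

theorem eq_C_mul_nodal_add_interpolate (hvs : Set.InjOn v s) {P : F[X]} (hP : P.natDegree ≤ #s) :
    P = C (P.coeff #s) * nodal s v + interpolate s v (fun i => P.eval (v i)) := by
  rw [← sub_eq_iff_eq_add']
  refine eq_interpolate_of_eval_eq _ hvs ?_ fun i hi => by simp [eval_nodal_at_node hi]
  rw [degree_lt_iff_coeff_zero]
  intro m hm
  rcases (show #s ≤ m by exact_mod_cast hm).eq_or_lt with rfl | hlt
  · have hlead : (nodal s v).coeff #s = 1 := by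
      simpa only [natDegree_nodal] using (nodal_monic (s := s) (v := v)).coeff_natDegree
    rw [coeff_sub, coeff_C_mul, hlead, mul_one, sub_self]
  · rw [coeff_sub, coeff_C_mul, coeff_eq_zero_of_natDegree_lt (hP.trans_lt hlt),
      coeff_eq_zero_of_natDegree_lt (natDegree_nodal.trans_lt hlt), mul_zero, sub_zero]

theorem eval_zero_eq_coeff_mul_prod_add_sum (hvs : Set.InjOn v s) (hv : ∀ i ∈ s, v i ≠ 0)
    {P : F[X]} (hP : P.natDegree ≤ #s) :
    P.eval 0 = P.coeff #s * ∏ i ∈ s, -v i +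
      ∑ i ∈ s, P.eval (v i) / ∏ j ∈ s.erase i, (1 - v i / v j) := by
  conv_lhs => rw [eq_C_mul_nodal_add_interpolate hvs hP]
  simp only [eval_add, eval_mul, eval_C, eval_nodal, zero_sub, interpolate_apply, eval_finsetSum,
    Lagrange.basis, eval_prod, basisDivisor, div_eq_mul_inv, ← prod_inv_distrib]
  refine congrArg _ (sum_congr rfl fun i _ => congrArg _ (prod_congr rfl fun j hj => ?_))
  rw [← div_eq_mul_inv (v i), one_sub_div (hv j (mem_of_mem_erase hj)), inv_div, eval_sub, eval_X,
    eval_C, zero_sub, ← neg_sub, inv_neg, neg_mul_neg, inv_mul_eq_div]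

theorem eval_zero_eq_of_extra_node {κ : Type*} [Fintype κ] [DecidableEq κ] {z : κ → F}
    (hz : Function.Injective z) (hz0 : ∀ i, z i ≠ 0) {w : F} (hw0 : w ≠ 0) (hzw : ∀ i, z i ≠ w)
    {P : F[X]} (hP : P.natDegree ≤ Fintype.card κ + 1) :
    P.eval 0 = P.coeff (Fintype.card κ + 1) * (-w * ∏ i, -z i) + P.eval w / ∏ i, (1 - w / z i) +
      ∑ l, P.eval (z l) / ((1 - z l / w) * ∏ i ∈ univ.erase l, (1 - z l / z i)) := by
  classical
  have hwt : w ∉ univ.map ⟨z, hz⟩ := by simpa using hzw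
  have hwl : ∀ l, w ∉ (univ.erase l).map ⟨z, hz⟩ := fun l => by simpa using fun _ i => hzw i
  have herase : ∀ l, (insert w (univ.map ⟨z, hz⟩)).erase (z l) =
      insert w ((univ.erase l).map ⟨z, hz⟩) := fun l => by
    rw [erase_insert_of_ne (hzw l).symm, map_erase]; rfl
  have hcard : #(insert w (univ.map ⟨z, hz⟩)) = Fintype.card κ + 1 := by
    rw [card_insert_of_notMem hwt, card_map, card_univ]
  have key := eval_zero_eq_coeff_mul_prod_add_sum (s := insert w (univ.map ⟨z, hz⟩)) (v := id)
    (Set.injOn_id _) (by simpa using ⟨hw0, hz0⟩) (hcard ▸ hP)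
  rw [key, hcard, sum_insert hwt, prod_insert hwt, erase_insert hwt, sum_map, prod_map, prod_map,
    add_assoc]
  simp only [id, Function.Embedding.coeFn_mk, herase, prod_insert (hwl _), prod_map]

theorem one_eq_partial_fraction_sum {κ : Type*} [Fintype κ] [DecidableEq κ] {z : κ → F}
    (hz : Function.Injective z) (hz0 : ∀ i, z i ≠ 0) {w : F} (hw0 : w ≠ 0) (hzw : ∀ i, z i ≠ w)
    (f : F) (b : κ → F) :
    1 = f * w * ∏ i, (b i * z i) + (1 - f * w) * (∏ i, (1 - b i * w)) / ∏ i, (1 - w / z i) +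
      ∑ l, (1 - f * z l) * (∏ i, (1 - b i * z l)) /
        ((1 - z l / w) * ∏ i ∈ univ.erase l, (1 - z l / z i)) := by
  set P : F[X] := (1 - C f * X) * ∏ i, (1 - C (b i) * X)
  have hPeval : ∀ x, P.eval x = (1 - f * x) * ∏ i, (1 - b i * x) := by simp [P, eval_prod]
  have hPdeg : P.natDegree ≤ Fintype.card κ + 1 := by
    simpa [add_comm] using natDegree_mul_le.trans
      (add_le_add (natDegree_one_sub_C_mul_X_le f) (natDegree_prod_one_sub_C_mul_X_le univ b))
  have hPcoeff : P.coeff (Fintype.card κ + 1) = -f * ∏ i, -b i := by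
    rw [add_comm, ← card_univ, coeff_mul_add_eq_of_natDegree_le (natDegree_one_sub_C_mul_X_le f)
      (natDegree_prod_one_sub_C_mul_X_le univ b), coeff_prod_one_sub_C_mul_X_card]
    simp [coeff_one]
  have hlead : -f * (∏ i, -b i) * (-w * ∏ i, -z i) = f * w * ∏ i, (b i * z i) := by
    have hprod : (∏ i, -b i) * ∏ i, -z i = ∏ i, (b i * z i) := by
      simp only [← prod_mul_distrib, neg_mul_neg]
    linear_combination f * w * hprod
  have key := eval_zero_eq_of_extra_node hz hz0 hw0 hzw hPdeg
  simpa only [hPcoeff, hlead, hPeval, mul_zero, sub_zero, prod_const_one, mul_one, mul_div_assoc]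
    using key

end Lagrange

theorem reparametrized_partial_fraction_identity_general
    (r : ℕ)
    (a c f q : ℂ) (e z : Fin r → ℂ)
    (ha : a ≠ 0) (hc : c ≠ 0) (hq : q ≠ 0)
    (hz : ∀ i, z i ≠ 0) (hzinj : Function.Injective z)
    (hEf : c * (∏ i, e i) * f ≠ a * q)
    (hlc : ∀ l, a * z l * q ≠ c) :
    (∑ l, ((1 - f * z l) * ∏ i, (1 - e i * z l / z i)) /
        ((1 - c * (∏ i, e i) * f / (a * q)) * (1 - a * z l * q / c) *
          ∏ i ∈ Finset.univ.erase l, (1 - z l / z i))) =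
      1 - (1 - c * f / (a * q)) / (1 - c * (∏ i, e i) * f / (a * q)) *
        ∏ i, (1 - c * e i / (a * z i * q)) / (1 - c / (a * z i * q)) := by
  have haq : a * q ≠ 0 := mul_ne_zero ha hq
  have hD : 1 - c * (∏ i, e i) * f / (a * q) ≠ 0 := by
    rwa [sub_ne_zero, ne_comm, ne_eq, div_eq_one_iff_eq haq]
  have hzw : ∀ l, z l ≠ c / (a * q) := fun l h => hlc l (by rw [h]; field_simp)
  have key := Lagrange.one_eq_partial_fraction_sum hzinj hz (div_ne_zero hc haq) hzw f
    fun i => e i / z i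
  have hlead : f * (c / (a * q)) * ∏ i, (e i / z i * z i) = c * (∏ i, e i) * f / (a * q) := by
    simp only [div_mul_cancel₀ _ (hz _)]
    ring
  have hextra : (1 - f * (c / (a * q))) * (∏ i, (1 - e i / z i * (c / (a * q)))) /
      ∏ i, (1 - c / (a * q) / z i) =
      (1 - c * f / (a * q)) * ∏ i, (1 - c * e i / (a * z i * q)) / (1 - c / (a * z i * q)) := by
    rw [mul_div_assoc, ← prod_div_distrib]
    congr 1
    · ring
    · exact prod_congr rfl fun i _ => by congr 1 <;> ring
  have hnode : ∀ l, ((1 - f * z l) * ∏ i, (1 - e i * z l / z i)) /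
      ((1 - c * (∏ i, e i) * f / (a * q)) * (1 - a * z l * q / c) *
        ∏ i ∈ univ.erase l, (1 - z l / z i)) =
      (1 - f * z l) * (∏ i, (1 - e i / z i * z l)) /
        ((1 - z l / (c / (a * q))) * ∏ i ∈ univ.erase l, (1 - z l / z i)) /
        (1 - c * (∏ i, e i) * f / (a * q)) := by
    intro l
    have hratio : a * z l * q / c = z l / (c / (a * q)) := by rw [div_div_eq_mul_div]; ring
    rw [hratio, mul_assoc, mul_comm (1 - c * _ * f / _), ← div_div]
    exact congrArg (· / _ / _) (congrArg _ (prod_congr rfl fun i _ => by ring))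
  rw [hlead, hextra] at key
  rw [sum_congr rfl fun l _ => hnode l, ← sum_div, eq_sub_of_add_eq' key.symm, sub_add_eq_sub_sub,
    sub_div, div_self hD, div_mul_eq_mul_div]

/-- A reparametrized partial fraction identity used in the proof of the
`A_{r−1}` ₈φ₇ summation. -/
theorem reparametrized_partial_fraction_identity
    (r : ℕ) (hr : 1 ≤ r)
    (a c f q : ℂ) (e z : Fin r → ℂ)
    (ha : a ≠ 0) (hc : c ≠ 0) (hf : f ≠ 0) (hq : q ≠ 0)
    (he : ∀ i, e i ≠ 0) (hz : ∀ i, z i ≠ 0) (hzinj : Function.Injective z)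
    (hEf : c * (∏ i, e i) * f ≠ a * q)
    (hlc : ∀ l, a * z l * q ≠ c) :
    (∑ l, ((1 - f * z l) * ∏ i, (1 - e i * z l / z i)) /
        ((1 - c * (∏ i, e i) * f / (a * q)) * (1 - a * z l * q / c) *
          ∏ i ∈ Finset.univ.erase l, (1 - z l / z i))) =
      1 - (1 - c * f / (a * q)) / (1 - c * (∏ i, e i) * f / (a * q)) *
        ∏ i, (1 - c * e i / (a * z i * q)) / (1 - c / (a * z i * q)) :=
  reparametrized_partial_fraction_identity_general r a c f q e z ha hc hq hz hzinj hEf hlc
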